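/- Let (N, K, v) be an incomplete cooperative game with K intersection-closed and N ∈ K. Then (N, K, v) is P-extendable if and only if Δ_v(S) ≥ 0 for every S ∈ K, where Δ_v : K → ℝ is defined recursively by Δ_v(S) = v(S) − Σ_{T ∈ K, T ⊊ S} Δ_v(T). -/
import Mathlib


open Finset

variable {α : Type*} [Fintype α] [DecidableEq α]

/-- A set system is intersection-closed if it is closed under pairwise intersections. -/
def InterClosed (K : Finset (Finset α)) : Prop :=
  ∀ S ∈ K, ∀ T ∈ K, S ∩ T ∈ K

/-- The closure `c_K(T) = ⋂ {S ∈ K : T ⊆ S}` of a coalition `T` in the set system `K`. -/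
def cl (K : Finset (Finset α)) (T : Finset α) : Finset α :=
  (K.filter fun S => T ⊆ S).inf id

/-- The family `C(T)` of coalitions indistinguishable from `T`. -/
def classOf (K : Finset (Finset α)) (T : Finset α) : Finset (Finset α) :=
  Finset.univ.filter fun X => cl K X = cl K T

/-- The Harsanyi dividend `d_w(S) = w S - ∑_{T ⊊ S} d_w(T)`. -/
noncomputable def dividend (w : Finset α → ℝ) (S : Finset α) : ℝ :=
  w S - ∑ T ∈ (S.powerset.erase S).attach, dividend w T.1
termination_by S.card
decreasing_by
  have h := T.2
  simp only [mem_erase, mem_powerset] at h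
  exact Finset.card_lt_card (h.2.ssubset_of_ne h.1)

/-- The surplus `Δ_v(S) = v S - ∑_{T ∈ K, T ⊊ S} Δ_v(T)` for `S ∈ K`. -/
noncomputable def Delta (K : Finset (Finset α)) (v : Finset α → ℝ) (S : Finset α) : ℝ :=
  v S - ∑ T ∈ (K.filter fun T => T ⊂ S).attach, Delta K v T.1
termination_by S.card
decreasing_by
  have h := T.2
  simp only [mem_filter] at h
  exact Finset.card_lt_card h.2

/-- A δ-system for the incomplete game `(N, K, v)`. -/
def IsDeltaSystem (K : Finset (Finset α)) (v δ : Finset α → ℝ) : Prop :=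
  (∀ S ∈ K, ∑ T ∈ S.powerset, δ T = v S) ∧
  ∀ S T : Finset α, cl K S = cl K T → δ S = δ T

/-- The payoff `Φ_i = ∑_{S ∋ i} δ(S)/|S|` computed from a dividend function `δ`. -/
noncomputable def UDofDelta (δ : Finset α → ℝ) (i : α) : ℝ :=
  ∑ S ∈ Finset.univ.filter (fun S => i ∈ S), δ S / S.card

/-- The complete game whose Harsanyi dividends are `δ`. -/
def gameOf (δ : Finset α → ℝ) (S : Finset α) : ℝ := ∑ T ∈ S.powerset, δ T

/-- A P-extension: a positive cooperative game agreeing with `v` on `K`. -/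
def PExtension (K : Finset (Finset α)) (v w : Finset α → ℝ) : Prop :=
  w ∅ = 0 ∧ (∀ S, 0 ≤ dividend w S) ∧ ∀ S ∈ K, w S = v S

/-- P-extendability of an incomplete game. -/
def PExtendable (K : Finset (Finset α)) (v : Finset α → ℝ) : Prop :=
  ∃ w, PExtension K v w

/-- The Shapley value `φ_i(w) = ∑_{S ∋ i} d_w(S)/|S|`. -/
noncomputable def shapley (w : Finset α → ℝ) (i : α) : ℝ :=
  ∑ S ∈ Finset.univ.filter (fun S => i ∈ S), dividend w S / S.card


lemma sum_dividend (w : Finset α → ℝ) (S : Finset α) :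
    ∑ T ∈ S.powerset, dividend w T = w S := by
  rw [show S.powerset = insert S (S.powerset.erase S) from
        (Finset.insert_erase (Finset.mem_powerset_self S)).symm,
      Finset.sum_insert (Finset.notMem_erase _ _), dividend, Finset.sum_attach]
  ring

lemma dividend_gameOf (δ : Finset α → ℝ) (S : Finset α) :
    dividend (gameOf δ) S = δ S := by
  induction S using Finset.strongInduction with
  | _ S ih =>
    have hcongr : ∑ T ∈ S.powerset.erase S, dividend (gameOf δ) T
        = ∑ T ∈ S.powerset.erase S, δ T := by
      refine Finset.sum_congr rfl fun T hT => ?_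
      simp only [Finset.mem_erase, Finset.mem_powerset] at hT
      exact ih T (hT.2.ssubset_of_ne hT.1)
    rw [dividend, Finset.sum_attach, hcongr, gameOf,
        show S.powerset = insert S (S.powerset.erase S) from
          (Finset.insert_erase (Finset.mem_powerset_self S)).symm,
        Finset.sum_insert (Finset.notMem_erase _ _),
        Finset.erase_insert (Finset.notMem_erase _ _)]
    ring

lemma filter_subset_eq_insert {K : Finset (Finset α)} {S : Finset α} (hS : S ∈ K) :
    K.filter (fun T => T ⊆ S) = insert S (K.filter fun T => T ⊂ S) := by
  ext T
  simp only [Finset.mem_filter, Finset.mem_insert]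
  constructor
  · rintro ⟨hT, hsub⟩
    rcases hsub.ssubset_or_eq with h | h
    · exact Or.inr ⟨hT, h⟩
    · exact Or.inl h
  · rintro (rfl | ⟨hT, h⟩)
    · exact ⟨hS, subset_rfl⟩
    · exact ⟨hT, h.subset⟩

lemma sum_Delta (K : Finset (Finset α)) (v : Finset α → ℝ) {S : Finset α} (hS : S ∈ K) :
    ∑ T ∈ K.filter (fun T => T ⊆ S), Delta K v T = v S := by
  have hnm : S ∉ K.filter (fun T => T ⊂ S) := by
    simp only [Finset.mem_filter]
    exact fun h => ssubset_irrefl S h.2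
  rw [filter_subset_eq_insert hS, Finset.sum_insert hnm, Delta, Finset.sum_attach]
  ring

lemma Delta_eq_of (K : Finset (Finset α)) (v : Finset α → ℝ) (g : Finset α → ℝ)
    (hg : ∀ S ∈ K, ∑ T ∈ K.filter (fun T => T ⊆ S), g T = v S) :
    ∀ S, S ∈ K → Delta K v S = g S := by
  intro S
  induction S using Finset.strongInduction with
  | _ S ih =>
    intro hS
    have hnm : S ∉ K.filter (fun T => T ⊂ S) := by
      simp only [Finset.mem_filter]
      exact fun h => ssubset_irrefl S h.2
    have h1 := hg S hS
    rw [filter_subset_eq_insert hS, Finset.sum_insert hnm] at h1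
    rw [Delta, Finset.sum_attach,
        Finset.sum_congr rfl (fun T hT => ih T (Finset.mem_filter.mp hT).2 (Finset.mem_filter.mp hT).1),
        ← h1]
    ring

lemma subset_cl (K : Finset (Finset α)) (T : Finset α) : T ⊆ cl K T := by
  have h : T ≤ (K.filter fun S => T ⊆ S).inf id :=
    Finset.le_inf fun S hS => (Finset.mem_filter.mp hS).2
  exact h

lemma cl_subset {K : Finset (Finset α)} {S T : Finset α} (hS : S ∈ K) (hTS : T ⊆ S) :
    cl K T ⊆ S := by
  have h : (K.filter fun X => T ⊆ X).inf id ≤ id S :=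
    Finset.inf_le (Finset.mem_filter.mpr ⟨hS, hTS⟩)
  exact h

lemma inf_mem_of_interClosed {K : Finset (Finset α)} (hIC : InterClosed K) :
    ∀ F : Finset (Finset α), F.Nonempty → F ⊆ K → F.inf id ∈ K := by
  intro F hne
  induction hne using Finset.Nonempty.cons_induction with
  | singleton a => intro h; simpa using h (Finset.mem_singleton_self a)
  | cons a F ha hne ih =>
    intro hsub
    rw [Finset.inf_cons]
    exact hIC a (hsub (Finset.mem_cons_self a F)) _
      (ih fun x hx => hsub (Finset.mem_cons.mpr (Or.inr hx)))

lemma cl_mem {K : Finset (Finset α)} (hIC : InterClosed K)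
    (hN : (Finset.univ : Finset α) ∈ K) (T : Finset α) : cl K T ∈ K := by
  apply inf_mem_of_interClosed hIC
  · exact ⟨Finset.univ, Finset.mem_filter.mpr ⟨hN, Finset.subset_univ T⟩⟩
  · exact Finset.filter_subset _ _

/-- an intersection-closed incomplete game is P-extendable iff
`Δ_v(S) ≥ 0` for every `S ∈ K`. -/
theorem pExtendable_iff_Delta_nonneg (K : Finset (Finset α))
    (hIC : InterClosed K) (hempty : ∅ ∈ K) (hN : (Finset.univ : Finset α) ∈ K)
    (v : Finset α → ℝ) (hv : v ∅ = 0) :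
    PExtendable K v ↔ ∀ S ∈ K, 0 ≤ Delta K v S := by
  constructor
  · rintro ⟨w, hw0, hwpos, hwK⟩ S hS
    set g : Finset α → ℝ := fun S' => ∑ T ∈ Finset.univ.filter (fun T => cl K T = S'), dividend w T
      with hgdef
    have hg : ∀ S ∈ K, ∑ T ∈ K.filter (fun T => T ⊆ S), g T = v S := by
      intro S hS
      have hmap : ∀ T ∈ S.powerset, cl K T ∈ K.filter (fun T => T ⊆ S) := by
        intro T hT
        exact Finset.mem_filter.mpr ⟨cl_mem hIC hN T, cl_subset hS (Finset.mem_powerset.mp hT)⟩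
      have hfib := Finset.sum_fiberwise_of_maps_to hmap (dividend w)
      calc ∑ S' ∈ K.filter (fun T => T ⊆ S), g S'
          = ∑ S' ∈ K.filter (fun T => T ⊆ S),
              ∑ T ∈ S.powerset.filter (fun T => cl K T = S'), dividend w T := by
            refine Finset.sum_congr rfl fun S' hS' => ?_
            refine Finset.sum_congr ?_ fun _ _ => rfl
            ext T
            simp only [Finset.mem_filter, Finset.mem_univ, true_and, Finset.mem_powerset]
            constructor
            · rintro rfl
              exact ⟨(subset_cl K T).trans (Finset.mem_filter.mp hS').2, rfl⟩
            · exact fun h => h.2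
        _ = ∑ T ∈ S.powerset, dividend w T := hfib
        _ = v S := by rw [sum_dividend]; exact hwK S hS
    rw [Delta_eq_of K v g hg S hS, hgdef]
    exact Finset.sum_nonneg fun T _ => hwpos T
  · intro h
    refine ⟨gameOf (fun S => if S ∈ K then Delta K v S else 0), ?_, ?_, ?_⟩
    · have hfe : K.filter (fun T => T ⊂ (∅ : Finset α)) = ∅ :=
        Finset.filter_false_of_mem fun T _ hT => Finset.not_ssubset_empty T hT
      have : Delta K v ∅ = v ∅ := by
        rw [Delta, Finset.sum_attach, hfe, Finset.sum_empty, sub_zero]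
      simp [gameOf, this, hv, hempty]
    · intro S
      rw [dividend_gameOf]
      split
      · exact h S ‹_›
      · exact le_refl 0
    · intro S hS
      rw [gameOf, Finset.sum_ite_mem, ← sum_Delta K v hS]
      refine Finset.sum_congr ?_ fun _ _ => rfl
      ext T
      simp only [Finset.mem_inter, Finset.mem_powerset, Finset.mem_filter]
      exact and_comm
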